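/- arXiv:2105.01494 — 9 statements merged into one kernel-verified Lean document; each statement's English description precedes it below -/
import Mathlib

section
/- For y > 1 and β ≥ 0, the function g(s) = s / (y^(sβ) * (y^s - 1)) is strictly decreasing on (1, ∞). -/
open Real

theorem stmt1 (y β : ℝ) (hy : 1 < y) (hβ : 0 ≤ β) :
    StrictAntiOn (fun s : ℝ => s / (y ^ (s * β) * (y ^ s - 1))) (Set.Ioi 1) := by
  have hy0 : (0:ℝ) < y := lt_trans one_pos hy
  have hlog : 0 < Real.log y := Real.log_pos hy
  intro a ha b hb hab
  simp only [Set.mem_Ioi] at ha hb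
  have ha0 : (0:ℝ) < a := lt_trans one_pos ha
  have hb0 : (0:ℝ) < b := lt_trans one_pos hb
  have hya : 1 < y ^ a := (Real.one_lt_rpow_iff_of_pos hy0).mpr (Or.inl ⟨hy, ha0⟩)
  have hyb : 1 < y ^ b := (Real.one_lt_rpow_iff_of_pos hy0).mpr (Or.inl ⟨hy, hb0⟩)
  -- secant slope of exp is strictly monotone
  have h := strictConvexOn_exp.secant_strict_mono (Set.mem_univ (0:ℝ))
      (Set.mem_univ (a * Real.log y)) (Set.mem_univ (b * Real.log y))
      (mul_pos ha0 hlog).ne' (mul_pos hb0 hlog).ne'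
      (mul_lt_mul_of_pos_right hab hlog)
  have hea : Real.exp (a * Real.log y) = y ^ a := by
    rw [Real.rpow_def_of_pos hy0, mul_comm]
  have heb : Real.exp (b * Real.log y) = y ^ b := by
    rw [Real.rpow_def_of_pos hy0, mul_comm]
  rw [hea, heb, Real.exp_zero, sub_zero, sub_zero] at h
  have key : (y ^ a - 1) / a < (y ^ b - 1) / b := by
    have ha' : (y ^ a - 1) / (a * Real.log y) = ((y ^ a - 1) / a) / Real.log y := by
      rw [div_div]
    have hb' : (y ^ b - 1) / (b * Real.log y) = ((y ^ b - 1) / b) / Real.log y := by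
      rw [div_div]
    rw [ha', hb'] at h
    exact (div_lt_div_iff_of_pos_right hlog).mp h
  have key2 : b / (y ^ b - 1) < a / (y ^ a - 1) := by
    rw [div_lt_div_iff₀ (sub_pos.mpr hyb) (sub_pos.mpr hya)]
    rw [div_lt_div_iff₀ ha0 hb0] at key
    nlinarith
  have hpowa : 0 < y ^ (a * β) := Real.rpow_pos_of_pos hy0 _
  have hmono : y ^ (a * β) ≤ y ^ (b * β) :=
    Real.rpow_le_rpow_of_exponent_le hy.le (mul_le_mul_of_nonneg_right hab.le hβ)
  show b / (y ^ (b * β) * (y ^ b - 1)) < a / (y ^ (a * β) * (y ^ a - 1))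
  calc b / (y ^ (b * β) * (y ^ b - 1)) ≤ b / (y ^ (a * β) * (y ^ b - 1)) :=
        div_le_div_of_nonneg_left hb0.le (mul_pos hpowa (sub_pos.mpr hyb))
          (mul_le_mul_of_nonneg_right hmono (sub_pos.mpr hyb).le)
      _ = (b / (y ^ b - 1)) / y ^ (a * β) := by
        rw [div_div, mul_comm]
      _ < (a / (y ^ a - 1)) / y ^ (a * β) := by gcongr
      _ = a / (y ^ (a * β) * (y ^ a - 1)) := by
        rw [div_div, mul_comm]
end

section
/- Let r ∈ ℕ, and let u_1, ..., u_{r+1} be positive real numbers with u_1 + ⋯ + u_{r+1} = 1. Then for all β ≥ 0 and y > 1, the sum over i of 1/(y^(β/u_i) * (y^(1/u_i) - 1)) is strictly less than 1/(y^β * (y - 1)). -/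
theorem stmt3 (r : ℕ) (hr : 1 ≤ r) (u : Fin (r + 1) → ℝ) (hu : ∀ i, 0 < u i)
    (hsum : ∑ i, u i = 1) (β y : ℝ) (hβ : 0 ≤ β) (hy : 1 < y) :
    ∑ i, 1 / (y ^ (β / u i) * (y ^ (1 / u i) - 1)) < 1 / (y ^ β * (y - 1)) := by
  have hy0 : 0 < y := lt_trans one_pos hy
  have hB : 0 < y ^ β * (y - 1) :=
    mul_pos (Real.rpow_pos_of_pos hy0 β) (by linarith)
  have key : ∀ i, 1 / (y ^ (β / u i) * (y ^ (1 / u i) - 1)) <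
      u i * (1 / (y ^ β * (y - 1))) := by
    intro i
    have hui : 0 < u i := hu i
    have hlt1 : u i < 1 := by
      rw [← hsum]
      have : Nontrivial (Fin (r + 1)) := Fin.nontrivial_iff_two_le.mpr (by omega)
      obtain ⟨j, hj⟩ := exists_ne i
      exact Finset.single_lt_sum hj (Finset.mem_univ i) (Finset.mem_univ j)
        (hu j) (fun k _ _ => (hu k).le)
    have ht : 1 < 1 / u i := (one_lt_div hui).mpr hlt1
    -- Bernoulli: y ^ (1/u i) > 1 + (1/u i) * (y - 1)
    have hbern : 1 + (1 / u i) * (y - 1) < y ^ (1 / u i) := by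
      have := one_add_mul_self_lt_rpow_one_add (s := y - 1)
        (by linarith) (by intro h; linarith [sub_eq_zero.mp h]) (p := 1 / u i) ht
      simpa [add_sub_cancel] using this
    have hX1 : (1 / u i) * (y - 1) < y ^ (1 / u i) - 1 := by linarith
    have hβle : y ^ β ≤ y ^ (β / u i) := by
      apply Real.rpow_le_rpow_left_iff hy |>.mpr
      rw [div_eq_mul_inv]
      nlinarith [inv_strictAnti₀ hui hlt1]
    have hXpos : 0 < y ^ (β / u i) * (y ^ (1 / u i) - 1) := by
      have : (0:ℝ) < (1 / u i) * (y - 1) := mul_pos (by positivity) (by linarith)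
      exact mul_pos (Real.rpow_pos_of_pos hy0 _) (by linarith)
    rw [mul_one_div, div_lt_div_iff₀ hXpos hB, one_mul]
    calc y ^ β * (y - 1) = u i * (y ^ β * ((1 / u i) * (y - 1))) := by
          field_simp
      _ < u i * (y ^ (β / u i) * (y ^ (1 / u i) - 1)) := by
          apply mul_lt_mul_of_pos_left _ hui
          apply mul_lt_mul' hβle hX1
            (le_of_lt (mul_pos (by positivity) (by linarith)))
            (Real.rpow_pos_of_pos hy0 _)
  calc ∑ i, 1 / (y ^ (β / u i) * (y ^ (1 / u i) - 1))
      < ∑ i, u i * (1 / (y ^ β * (y - 1))) :=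
        Finset.sum_lt_sum_of_nonempty Finset.univ_nonempty (fun i _ => key i)
    _ = 1 / (y ^ β * (y - 1)) := by rw [← Finset.sum_mul, hsum, one_mul]
end

section
/- For fixed y > 1 and β ≥ 0, the function H(u) = 1 / (y^(β/u) * (y^(1/u) - 1)) is strictly convex on (0, ∞). -/
/-!
With `L = log y`, `H u = 1 / (exp (a / u) - exp (b / u))` where `a = L (β + 1) > b = L β ≥ 0`,
so `H u = u ψ (1 / u)` is the perspective of `ψ t = t / (exp (a t) - exp (b t))`, and perspectives
of strictly convex functions are strictly convex. For `ψ`, the numerator of `ψ''`, multiplied by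
`a - b` and written in `s = (a - b) t` and `w = exp s`, becomes a positive combination of
`s (w + 1) - 2 (w - 1)` (positive since `tanh (s / 2) < s / 2`) and `w ^ 2 - 2 s w - 1`
(positive since `s < sinh s`).
-/

open Real Set

theorem two_mul_exp_sub_one_lt_mul_exp_add_one {s : ℝ} (hs : 0 < s) :
    2 * (exp s - 1) < s * (exp s + 1) := by
  let g : ℝ → ℝ := fun s => s * (exp s + 1) - 2 * (exp s - 1)
  have hg : ∀ t, HasDerivAt g (t * exp t - exp t + 1) t := fun t => by
    refine (((hasDerivAt_id t).mul ((hasDerivAt_exp t).add_const 1)).sub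
      (((hasDerivAt_exp t).sub_const 1).const_mul 2)).congr_deriv ?_
    simp only [id]; ring
  have hmono : StrictMonoOn g (Ici 0) := by
    refine strictMonoOn_of_deriv_pos (convex_Ici 0)
      (fun t _ => (hg t).continuousAt.continuousWithinAt) fun t ht => ?_
    rw [interior_Ici] at ht
    rw [(hg t).deriv]
    -- `1 - t < exp (-t)`, multiplied by `exp t`
    have h := add_one_lt_exp (neg_ne_zero.mpr (ne_of_gt ht))
    have h' : exp (-t) * exp t = 1 := by rw [← exp_add]; simp
    nlinarith [mul_lt_mul_of_pos_right h (exp_pos t)]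
  have := hmono self_mem_Ici hs.le hs
  simp only [g, zero_mul, exp_zero] at this
  linarith

theorem two_mul_mul_exp_add_one_lt_exp_sq {s : ℝ} (hs : 0 < s) :
    2 * s * exp s + 1 < exp s ^ 2 := by
  have h := self_lt_sinh_iff.mpr hs
  rw [sinh_eq] at h
  have h' : exp (-s) * exp s = 1 := by rw [← exp_add]; simp
  nlinarith [exp_pos s, exp_pos (-s)]

theorem StrictConvexOn.mul_comp_inv {f : ℝ → ℝ} (hf : StrictConvexOn ℝ (Ioi 0) f) :
    StrictConvexOn ℝ (Ioi 0) (fun x => x * f x⁻¹) := by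
  refine ⟨convex_Ioi 0, fun x (hx : 0 < x) y (hy : 0 < y) hxy θ η hθ hη hθη => ?_⟩
  set z := θ * x + η * y
  have hz : 0 < z := by positivity
  -- `z⁻¹` is the convex combination of `x⁻¹` and `y⁻¹` with weights `θ x / z` and `η y / z`
  have hcomb : (θ * x / z) • x⁻¹ + (η * y / z) • y⁻¹ = z⁻¹ := by
    simp only [smul_eq_mul]; field_simp; exact hθη
  have hsum : θ * x / z + η * y / z = 1 := by rw [← add_div, div_self hz.ne']
  have h := hf.2 (inv_pos.2 hx) (inv_pos.2 hy) (inv_injective.ne hxy)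
    (by positivity) (by positivity) hsum
  rw [hcomb] at h
  simp only [smul_eq_mul] at h ⊢
  calc z * f z⁻¹ < z * (θ * x / z * f x⁻¹ + η * y / z * f y⁻¹) := mul_lt_mul_of_pos_left h hz
    _ = θ * (x * f x⁻¹) + η * (y * f y⁻¹) := by field_simp

theorem strictConvexOn_of_hasDerivAt2_pos {s : Set ℝ} (hs : Convex ℝ s) (hso : IsOpen s)
    {f f' f'' : ℝ → ℝ} (hf : ∀ x ∈ s, HasDerivAt f (f' x) x)
    (hf' : ∀ x ∈ s, HasDerivAt f' (f'' x) x) (hf'' : ∀ x ∈ s, 0 < f'' x) :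
    StrictConvexOn ℝ s f := by
  refine strictConvexOn_of_deriv2_pos hs (fun x hx => (hf x hx).continuousAt.continuousWithinAt)
    fun x hx => ?_
  rw [hso.interior_eq] at hx
  have hderiv : deriv f =ᶠ[nhds x] f' :=
    Filter.eventually_of_mem (hso.mem_nhds hx) fun u hu => (hf u hu).deriv
  rw [Function.iterate_succ_apply, Function.iterate_one, hderiv.deriv_eq, (hf' x hx).deriv]
  exact hf'' x hx

section IdDiv

variable {D D' D'' : ℝ → ℝ} {t : ℝ}

theorem hasDerivAt_id_div (hD : HasDerivAt D (D' t) t) (hDt : D t ≠ 0) :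
    HasDerivAt (fun t => t / D t) ((D t - t * D' t) / D t ^ 2) t :=
  ((hasDerivAt_id t).div hD hDt).congr_deriv (by simp)

theorem hasDerivAt_deriv_id_div (hD : HasDerivAt D (D' t) t) (hD' : HasDerivAt D' (D'' t) t)
    (hDt : D t ≠ 0) :
    HasDerivAt (fun t => (D t - t * D' t) / D t ^ 2)
      ((2 * t * D' t ^ 2 - t * D t * D'' t - 2 * D t * D' t) / D t ^ 3) t := by
  refine ((hD.sub ((hasDerivAt_id t).mul hD')).div (hD.pow 2) (pow_ne_zero 2 hDt)).congr_deriv ?_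
  simp only [Pi.sub_apply, Pi.mul_apply, Pi.pow_apply, id]
  field_simp
  ring

theorem strictConvexOn_id_div {s : Set ℝ} (hs : Convex ℝ s) (hso : IsOpen s)
    (hD : ∀ t ∈ s, HasDerivAt D (D' t) t) (hD' : ∀ t ∈ s, HasDerivAt D' (D'' t) t)
    (hDpos : ∀ t ∈ s, 0 < D t)
    (hnum : ∀ t ∈ s, 0 < 2 * t * D' t ^ 2 - t * D t * D'' t - 2 * D t * D' t) :
    StrictConvexOn ℝ s (fun t => t / D t) :=
  strictConvexOn_of_hasDerivAt2_pos hs hso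
    (fun t ht => hasDerivAt_id_div (hD t ht) (hDpos t ht).ne')
    (fun t ht => hasDerivAt_deriv_id_div (hD t ht) (hD' t ht) (hDpos t ht).ne')
    fun t ht => div_pos (hnum t ht) (pow_pos (hDpos t ht) 3)

end IdDiv

theorem id_div_exp_sub_exp_deriv2_numerator_pos {a b t : ℝ} (hb : 0 ≤ b) (hab : b < a)
    (ht : 0 < t) :
    0 < 2 * t * (a * exp (a * t) - b * exp (b * t)) ^ 2
      - t * (exp (a * t) - exp (b * t)) * (a ^ 2 * exp (a * t) - b ^ 2 * exp (b * t))
      - 2 * (exp (a * t) - exp (b * t)) * (a * exp (a * t) - b * exp (b * t)) := by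
  have hexp : exp (a * t) = exp (b * t) * exp ((a - b) * t) := by rw [← exp_add]; ring_nf
  rw [hexp]
  set s := (a - b) * t
  set B := exp (b * t)
  set w := exp s
  have hs : 0 < s := mul_pos (sub_pos.2 hab) ht
  have hP := sub_pos.2 (two_mul_exp_sub_one_lt_mul_exp_add_one hs)
  have hQ := sub_pos.2 (two_mul_mul_exp_add_one_lt_exp_sq hs)
  -- multiplying by `a - b` turns `t` into `s`
  have hid : (a - b) * (2 * t * (a * (B * w) - b * B) ^ 2
        - t * (B * w - B) * (a ^ 2 * (B * w) - b ^ 2 * B)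
        - 2 * (B * w - B) * (a * (B * w) - b * B))
      = B ^ 2 * (a ^ 2 * w * (s * (w + 1) - 2 * (w - 1)) + b ^ 2 * (s * (w + 1) - 2 * (w - 1))
          + 2 * a * b * (w ^ 2 - (2 * s * w + 1))) := by
    ring
  refine pos_of_mul_pos_right (hid ▸ ?_ : 0 < (a - b) * _) (sub_pos.2 hab).le
  have ha : 0 < a := hb.trans_lt hab
  have hw : 0 < w := exp_pos s
  have hB : 0 < B := exp_pos _
  positivity

theorem strictConvexOn_id_div_exp_sub_exp {a b : ℝ} (hb : 0 ≤ b) (hab : b < a) :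
    StrictConvexOn ℝ (Ioi 0) (fun t => t / (exp (a * t) - exp (b * t))) := by
  have hlin : ∀ (c t : ℝ), HasDerivAt (fun t => c * t) c t := fun c t => by
    simpa using (hasDerivAt_id t).const_mul c
  refine strictConvexOn_id_div (convex_Ioi 0) isOpen_Ioi
    (D' := fun t => a * exp (a * t) - b * exp (b * t))
    (D'' := fun t => a ^ 2 * exp (a * t) - b ^ 2 * exp (b * t))
    (fun t _ => ?_) (fun t _ => ?_) (fun t ht => ?_)
    fun t ht => id_div_exp_sub_exp_deriv2_numerator_pos hb hab ht
  · exact ((hlin a t).exp.sub (hlin b t).exp).congr_deriv (by ring)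
  · exact (((hlin a t).exp.const_mul a).sub ((hlin b t).exp.const_mul b)).congr_deriv (by ring)
  · exact sub_pos.2 (exp_lt_exp.2 (mul_lt_mul_of_pos_right hab ht))

theorem stmt4 (y β : ℝ) (hy : 1 < y) (hβ : 0 ≤ β) :
    StrictConvexOn ℝ (Set.Ioi 0)
      (fun u : ℝ => 1 / (y ^ (β / u) * (y ^ (1 / u) - 1))) := by
  have hy0 : 0 < y := zero_lt_one.trans hy
  have hlog : 0 < log y := log_pos hy
  have hψ := strictConvexOn_id_div_exp_sub_exp (mul_nonneg hlog.le hβ)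
    (mul_lt_mul_of_pos_left (lt_add_one β) hlog)
  refine hψ.mul_comp_inv.congr fun u (hu : 0 < u) => ?_
  simp only [rpow_def_of_pos hy0, mul_sub, ← exp_add, mul_one]
  field_simp
end

section
/- Let y > 1 and β ≥ 0. For all u ∈ (0,1), H(u) + H(1-u) < H(1), where H(u) = 1 / (y^(β/u) * (y^(1/u) - 1)). -/
/-!
Write `H u = 1 / D u` with `D u = y ^ (β / u) * (y ^ (1 / u) - 1)`. For `0 < u < 1`, Bernoulli's
inequality gives `y ^ (1 / u) - 1 > (y - 1) / u`, and `β ≥ 0` gives `y ^ (β / u) ≥ y ^ β`, so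
`D u > D 1 / u`, i.e. `H u < u * H 1`. Adding this for `u` and `1 - u` yields the claim.
-/

open Real

lemma mul_sub_one_lt_rpow_sub_one {y p : ℝ} (hy₀ : 0 ≤ y) (hy₁ : y ≠ 1) (hp : 1 < p) :
    p * (y - 1) < y ^ p - 1 := by
  have h := one_add_mul_self_lt_rpow_one_add (s := y - 1) (by linarith) (sub_ne_zero.2 hy₁) hp
  rw [add_sub_cancel] at h
  linarith

lemma rpow_mul_sub_one_lt_mul_rpow_div_mul {y β u : ℝ} (hy : 1 < y) (hβ : 0 ≤ β)
    (hu₀ : 0 < u) (hu₁ : u < 1) :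
    y ^ β * (y - 1) < u * (y ^ (β / u) * (y ^ (1 / u) - 1)) := by
  have hbernoulli : y - 1 < u * (y ^ (1 / u) - 1) := by
    have h := mul_sub_one_lt_rpow_sub_one (by linarith) hy.ne' (one_lt_one_div hu₀ hu₁)
    rwa [← div_lt_iff₀' hu₀, div_eq_mul_one_div, mul_comm]
  have hexp : y ^ β ≤ y ^ (β / u) :=
    rpow_le_rpow_of_exponent_le hy.le (le_div_self hβ hu₀ hu₁.le)
  calc y ^ β * (y - 1) ≤ y ^ (β / u) * (y - 1) := by gcongr
    _ < y ^ (β / u) * (u * (y ^ (1 / u) - 1)) := by gcongr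
    _ = u * (y ^ (β / u) * (y ^ (1 / u) - 1)) := by ring

theorem stmt6 (y β : ℝ) (hy : 1 < y) (hβ : 0 ≤ β)
    (H : ℝ → ℝ) (hH : ∀ u, H u = 1 / (y ^ (β / u) * (y ^ (1 / u) - 1))) :
    ∀ u ∈ Set.Ioo (0 : ℝ) 1, H u + H (1 - u) < H 1 := by
  have hD₁ : 0 < y ^ β * (y - 1) := mul_pos (rpow_pos_of_pos (by linarith) β) (by linarith)
  have hH₁ : H 1 = 1 / (y ^ β * (y - 1)) := by simp [hH]
  have hlt : ∀ v ∈ Set.Ioo (0 : ℝ) 1, H v < v / (y ^ β * (y - 1)) := by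
    rintro v ⟨hv₀, hv₁⟩
    have hD := rpow_mul_sub_one_lt_mul_rpow_div_mul hy hβ hv₀ hv₁
    rw [hH, div_lt_div_iff₀ (pos_of_mul_pos_right (hD₁.trans hD) hv₀.le) hD₁, one_mul]
    exact hD
  rintro u ⟨hu₀, hu₁⟩
  calc H u + H (1 - u) < u / (y ^ β * (y - 1)) + (1 - u) / (y ^ β * (y - 1)) :=
        add_lt_add (hlt u ⟨hu₀, hu₁⟩) (hlt (1 - u) ⟨by linarith, by linarith⟩)
    _ = H 1 := by rw [hH₁, ← add_div, add_sub_cancel]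
end

section
/- Let h : [0,∞) → (0,1] be differentiable such that (log h)' is strictly increasing on (0,∞), let ℓ ≥ 2, and let x_1, ..., x_ℓ > 0. Then h(x_1) ⋯ h(x_ℓ) < h(x_1 + ⋯ + x_ℓ). -/
/-!
Put `g = log ∘ h`. Since `g' = h'/h` is strictly increasing, `g` is strictly convex on `[0, ∞)`,
and `g 0 ≤ 0` because `h 0 ≤ 1`. A strictly convex function that is nonpositive at the origin lies
strictly below each of its chords from the origin, which makes it strictly superadditive on
`(0, ∞)`; induction on `ℓ` gives `∑ g (x i) < g (∑ x i)`, and exponentiating gives the claim.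
-/

open Set Finset

theorem strictConvexOn_log_comp {D : Set ℝ} (hD : Convex ℝ D) {f : ℝ → ℝ}
    (hf : DifferentiableOn ℝ f D) (hf0 : ∀ x ∈ D, f x ≠ 0)
    (hmono : StrictMonoOn (logDeriv f) (interior D)) :
    StrictConvexOn ℝ D (Real.log ∘ f) := by
  refine StrictMonoOn.strictConvexOn_of_deriv hD (hf.continuousOn.log hf0) (hmono.congr ?_)
  intro x hx
  exact (Real.deriv_log_comp_eq_logDeriv
    (hf.differentiableAt (mem_interior_iff_mem_nhds.1 hx)) (hf0 x (interior_subset hx))).symm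

theorem StrictConvexOn.add_lt_of_map_zero_nonpos {𝕜 : Type*} [Field 𝕜] [LinearOrder 𝕜]
    [IsStrictOrderedRing 𝕜] {f : 𝕜 → 𝕜} (hf : StrictConvexOn 𝕜 (Ici 0) f) (hf0 : f 0 ≤ 0)
    {a b : 𝕜} (ha : 0 < a) (hb : 0 < b) : f a + f b < f (a + b) := by
  have hab : 0 < a + b := add_pos ha hb
  have below_chord : ∀ c, 0 < c → c < a + b → (a + b) * f c < c * f (a + b) := by
    intro c hc hcs
    have h := hf.secant_strict_mono_aux1 self_mem_Ici (mem_Ici.2 hab.le) hc hcs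
    simp only [sub_zero] at h
    linarith [mul_nonpos_of_nonneg_of_nonpos (sub_nonneg.2 hcs.le) hf0]
  have h := add_lt_add (below_chord a ha (by linarith)) (below_chord b hb (by linarith))
  refine lt_of_mul_lt_mul_left ?_ hab.le
  linarith

theorem Fin.sum_apply_lt_apply_sum {M N : Type*} [AddCommMonoid M] [PartialOrder M]
    [IsOrderedCancelAddMonoid M] [AddCommMonoid N] [PartialOrder N] [IsOrderedCancelAddMonoid N]
    {f : M → N} (hf : ∀ a b, 0 < a → 0 < b → f a + f b < f (a + b))
    {ℓ : ℕ} (hℓ : 2 ≤ ℓ) (x : Fin ℓ → M) (hx : ∀ i, 0 < x i) :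
    ∑ i, f (x i) < f (∑ i, x i) := by
  induction ℓ, hℓ using Nat.le_induction with
  | base =>
    rw [Fin.sum_univ_two, Fin.sum_univ_two]
    exact hf _ _ (hx 0) (hx 1)
  | succ n hn ih =>
    have : NeZero n := ⟨by omega⟩
    have htail : 0 < ∑ i : Fin n, x i.succ := sum_pos (fun i _ => hx i.succ) univ_nonempty
    rw [Fin.sum_univ_succ, Fin.sum_univ_succ]
    calc f (x 0) + ∑ i : Fin n, f (x i.succ)
        < f (x 0) + f (∑ i : Fin n, x i.succ) := add_lt_add_right (ih _ fun i => hx i.succ) _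
      _ < f (x 0 + ∑ i : Fin n, x i.succ) := hf _ _ (hx 0) htail

theorem stmt11 (h : ℝ → ℝ) (hdiff : DifferentiableOn ℝ h (Set.Ici 0))
    (hval : ∀ x : ℝ, 0 ≤ x → h x ∈ Set.Ioc (0 : ℝ) 1)
    (hmono : StrictMonoOn (fun x => deriv h x / h x) (Set.Ioi 0))
    (ℓ : ℕ) (hℓ : 2 ≤ ℓ) (x : Fin ℓ → ℝ) (hx : ∀ i, 0 < x i) :
    ∏ i, h (x i) < h (∑ i, x i) := by
  have hconv : StrictConvexOn ℝ (Ici 0) (Real.log ∘ h) :=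
    strictConvexOn_log_comp (convex_Ici 0) hdiff (fun y hy => (hval y hy).1.ne')
      (by rwa [interior_Ici])
  have hlog0 : Real.log (h 0) ≤ 0 := Real.log_nonpos (hval 0 le_rfl).1.le (hval 0 le_rfl).2
  have hsum : ∑ i, Real.log (h (x i)) < Real.log (h (∑ i, x i)) :=
    Fin.sum_apply_lt_apply_sum (fun a b ha hb => hconv.add_lt_of_map_zero_nonpos hlog0 ha hb)
      hℓ x hx
  have hpos : ∀ i, 0 < h (x i) := fun i => (hval _ (hx i).le).1
  rwa [← Real.log_lt_log_iff (prod_pos fun i _ => hpos i)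
    (hval _ (sum_nonneg fun i _ => (hx i).le)).1, Real.log_prod fun i _ => (hpos i).ne']
end

section
/- For each natural number k and each real a ≥ 0, lim_{x → ∞} x^(k+1) [ψ^(k)(x + a) - ψ^(k)(x)] = (-1)^k k! a, where ψ^(k) is the k-th derivative of the digamma function. -/
noncomputable def digamma : ℝ → ℝ := deriv (fun x => Real.log (Real.Gamma x))

/-!
Differentiating Gauss's product for `log Γ` termwise gives
`ψ y - ψ x = ∑ j, (1 / (x + j) - 1 / (y + j))`, and differentiating further,
`ψ^(k) (x + a) - ψ^(k) x = (-1)^k k! ∑ j, ((x + j)^-(k+1) - (x + a + j)^-(k+1))`.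
By the mean value theorem the `j`-th summand lies between `a (k+1) (x + a + j)^-(k+2)` and
`a (k+1) (x + j)^-(k+2)`. For `a = 1` the series telescopes to `x^-(k+1)`, which squeezes
`(k+1) ∑ j, (y + j)^-(k+2)` between `y^-(k+1)` and `(y - 1)^-(k+1)`; hence `x^(k+1)` times the
series tends to `a`.
-/

open Filter Topology Real Finset

lemma hasDerivAt_inv_pow (m : ℕ) {t : ℝ} (ht : t ≠ 0) :
    HasDerivAt (fun s : ℝ => (s ^ m)⁻¹) (-m * (t ^ (m + 1))⁻¹) t := by
  refine ((hasDerivAt_pow m t).inv (pow_ne_zero m ht)).congr_deriv ?_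
  rcases m with _ | m
  · simp
  · rw [Nat.add_sub_cancel]
    field_simp
    ring

lemma exists_inv_pow_sub_inv_pow_eq (m : ℕ) {y b : ℝ} (hy : 0 < y) (hb : 0 ≤ b) :
    ∃ c ∈ Set.Icc y (y + b), (y ^ m)⁻¹ - ((y + b) ^ m)⁻¹ = b * m * (c ^ (m + 1))⁻¹ := by
  rcases hb.eq_or_lt with rfl | hb
  · exact ⟨y, by simp, by simp⟩
  have hpos : ∀ t ∈ Set.Icc y (y + b), 0 < t := fun t ht => hy.trans_le ht.1
  obtain ⟨c, hc, hslope⟩ := exists_hasDerivAt_eq_slope (fun t : ℝ => (t ^ m)⁻¹)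
    (fun t => -m * (t ^ (m + 1))⁻¹) (by linarith)
    (continuousOn_pow m |>.inv₀ fun t ht => pow_ne_zero m (hpos t ht).ne')
    (fun t ht => hasDerivAt_inv_pow m (hpos t (Set.Ioo_subset_Icc_self ht)).ne')
  refine ⟨c, Set.Ioo_subset_Icc_self hc, ?_⟩
  rw [add_sub_cancel_left, eq_div_iff hb.ne'] at hslope
  linear_combination hslope

lemma inv_pow_sub_inv_pow_le (m : ℕ) {y b : ℝ} (hy : 0 < y) (hb : 0 ≤ b) :
    (y ^ m)⁻¹ - ((y + b) ^ m)⁻¹ ≤ b * m * (y ^ (m + 1))⁻¹ := by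
  obtain ⟨c, hc, hEq⟩ := exists_inv_pow_sub_inv_pow_eq m hy hb
  rw [hEq]
  gcongr
  exact hc.1

lemma le_inv_pow_sub_inv_pow (m : ℕ) {y b : ℝ} (hy : 0 < y) (hb : 0 ≤ b) :
    b * m * ((y + b) ^ (m + 1))⁻¹ ≤ (y ^ m)⁻¹ - ((y + b) ^ m)⁻¹ := by
  obtain ⟨c, hc, hEq⟩ := exists_inv_pow_sub_inv_pow_eq m hy hb
  rw [hEq]
  have : 0 < c := hy.trans_le hc.1
  gcongr
  exact hc.2

lemma summable_inv_add_pow {x : ℝ} (hx : 0 < x) {m : ℕ} (hm : 2 ≤ m) :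
    Summable fun j : ℕ => ((x + j) ^ m)⁻¹ := by
  refine ((Real.summable_one_div_nat_add_rpow x m).mpr (by exact_mod_cast hm)).congr fun j => ?_
  rw [abs_of_pos (by positivity), Real.rpow_natCast, one_div, add_comm]

section InvPowSeries

variable {m : ℕ} {x b : ℝ}

lemma summable_inv_pow_sub_inv_pow (hm : 1 ≤ m) (hx : 0 < x) (hb : 0 ≤ b) :
    Summable fun j : ℕ => ((x + j) ^ m)⁻¹ - ((x + b + j) ^ m)⁻¹ := by
  refine Summable.of_nonneg_of_le (fun j => ?_) (fun j => ?_)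
    ((summable_inv_add_pow hx (by omega : 2 ≤ m + 1)).mul_left (b * m))
  · rw [add_right_comm]
    exact (mul_nonneg (by positivity) (by positivity)).trans
      (le_inv_pow_sub_inv_pow m (by positivity) hb)
  · rw [add_right_comm]
    exact inv_pow_sub_inv_pow_le m (by positivity) hb

lemma tsum_inv_pow_sub_inv_pow_le (hm : 1 ≤ m) (hx : 0 < x) (hb : 0 ≤ b) :
    ∑' j : ℕ, (((x + j) ^ m)⁻¹ - ((x + b + j) ^ m)⁻¹) ≤
      b * m * ∑' j : ℕ, ((x + j) ^ (m + 1))⁻¹ := by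
  rw [← tsum_mul_left]
  refine (summable_inv_pow_sub_inv_pow hm hx hb).tsum_le_tsum (fun j => ?_)
    ((summable_inv_add_pow hx (by omega)).mul_left _)
  rw [add_right_comm]
  exact inv_pow_sub_inv_pow_le m (by positivity) hb

lemma le_tsum_inv_pow_sub_inv_pow (hm : 1 ≤ m) (hx : 0 < x) (hb : 0 ≤ b) :
    b * m * ∑' j : ℕ, ((x + b + j) ^ (m + 1))⁻¹ ≤
      ∑' j : ℕ, (((x + j) ^ m)⁻¹ - ((x + b + j) ^ m)⁻¹) := by
  rw [← tsum_mul_left]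
  refine Summable.tsum_le_tsum (fun j => ?_)
    ((summable_inv_add_pow (by positivity) (by omega)).mul_left _)
    (summable_inv_pow_sub_inv_pow hm hx hb)
  rw [add_right_comm x b]
  exact le_inv_pow_sub_inv_pow m (by positivity) hb

lemma tsum_inv_pow_sub_inv_pow_add_one (hm : 1 ≤ m) (hx : 0 < x) :
    ∑' j : ℕ, (((x + j) ^ m)⁻¹ - ((x + 1 + j) ^ m)⁻¹) = (x ^ m)⁻¹ := by
  refine ((summable_inv_pow_sub_inv_pow hm hx zero_le_one).hasSum_iff_tendsto_nat.mpr ?_).tsum_eq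
  have htele : ∀ n : ℕ, ∑ j ∈ range n, (((x + j) ^ m)⁻¹ - ((x + 1 + j) ^ m)⁻¹) =
      (x ^ m)⁻¹ - ((x + n) ^ m)⁻¹ := fun n => by
    simpa [add_assoc, add_comm (1 : ℝ)] using sum_range_sub' (fun j : ℕ => ((x + j) ^ m)⁻¹) n
  simp only [htele]
  have hvanish : Tendsto (fun n : ℕ => ((x + n) ^ m)⁻¹) atTop (𝓝 0) :=
    ((tendsto_pow_atTop (by omega)).comp
      (tendsto_atTop_add_const_left atTop x tendsto_natCast_atTop_atTop)).inv_tendsto_atTop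
  simpa using tendsto_const_nhds.sub hvanish

lemma inv_pow_le_mul_tsum (hm : 1 ≤ m) (hx : 0 < x) :
    (x ^ m)⁻¹ ≤ m * ∑' j : ℕ, ((x + j) ^ (m + 1))⁻¹ := by
  simpa [tsum_inv_pow_sub_inv_pow_add_one hm hx] using
    tsum_inv_pow_sub_inv_pow_le hm hx zero_le_one

lemma mul_tsum_le_inv_pow (hm : 1 ≤ m) (hx : 0 < x) :
    m * ∑' j : ℕ, ((x + 1 + j) ^ (m + 1))⁻¹ ≤ (x ^ m)⁻¹ := by
  simpa [tsum_inv_pow_sub_inv_pow_add_one hm hx] using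
    le_tsum_inv_pow_sub_inv_pow hm hx zero_le_one

end InvPowSeries

lemma tendsto_div_add_atTop (c : ℝ) : Tendsto (fun x : ℝ => x / (x + c)) atTop (𝓝 1) := by
  have hshift : Tendsto (fun x : ℝ => x + c) atTop atTop :=
    tendsto_atTop_add_const_right _ c tendsto_id
  have h := (tendsto_const_nhds (x := (1 : ℝ))).sub
    ((tendsto_const_nhds (x := c)).div_atTop hshift)
  rw [sub_zero] at h
  refine h.congr' ?_
  filter_upwards [hshift.eventually_gt_atTop 0] with x hx
  field_simp
  ring

theorem tendsto_pow_mul_tsum_inv_pow_sub {m : ℕ} (hm : 1 ≤ m) {b : ℝ} (hb : 0 ≤ b) :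
    Tendsto (fun x : ℝ => x ^ m * ∑' j : ℕ, (((x + j) ^ m)⁻¹ - ((x + b + j) ^ m)⁻¹))
      atTop (𝓝 b) := by
  have hlim : ∀ c : ℝ, Tendsto (fun x : ℝ => b * (x / (x + c)) ^ m) atTop (𝓝 b) := fun c => by
    simpa using ((tendsto_div_add_atTop c).pow m).const_mul b
  refine tendsto_of_tendsto_of_tendsto_of_le_of_le' (hlim b) (hlim (-1)) ?_ ?_
  · filter_upwards [eventually_gt_atTop 0] with x hx
    have hxb : 0 < x + b := by linarith
    calc b * (x / (x + b)) ^ m = x ^ m * (b * ((x + b) ^ m)⁻¹) := by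
          rw [div_pow]; ring
      _ ≤ x ^ m * (b * (m * ∑' j : ℕ, ((x + b + j) ^ (m + 1))⁻¹)) := by
          gcongr; exact inv_pow_le_mul_tsum hm hxb
      _ ≤ _ := by
          gcongr
          simpa [mul_assoc] using le_tsum_inv_pow_sub_inv_pow hm hx hb
  · filter_upwards [eventually_gt_atTop 1] with x hx
    have hx1 : 0 < x + -1 := by linarith
    calc x ^ m * ∑' j : ℕ, (((x + j) ^ m)⁻¹ - ((x + b + j) ^ m)⁻¹)
        ≤ x ^ m * (b * (m * ∑' j : ℕ, ((x + -1 + 1 + j) ^ (m + 1))⁻¹)) := by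
          gcongr
          simpa [mul_assoc] using tsum_inv_pow_sub_inv_pow_le hm (by linarith) hb
      _ ≤ x ^ m * (b * ((x + -1) ^ m)⁻¹) := by
          gcongr; exact mul_tsum_le_inv_pow hm hx1
      _ = b * (x / (x + -1)) ^ m := by
          rw [div_pow]; ring

lemma hasDerivAt_log_Gamma {x : ℝ} (hx : 0 < x) :
    HasDerivAt (fun y => log (Gamma y)) (digamma x) x :=
  ((Real.differentiableAt_Gamma fun m => by linarith [(Nat.cast_nonneg m : (0 : ℝ) ≤ m)]).log
    (Gamma_pos_of_pos hx).ne').hasDerivAt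

lemma hasDerivAt_logGammaSeq (n : ℕ) {x : ℝ} (hx : 0 < x) :
    HasDerivAt (fun z => BohrMollerup.logGammaSeq z n)
      (log n - ∑ j ∈ range (n + 1), (x + j)⁻¹) x := by
  have hlog : ∀ j ∈ range (n + 1), HasDerivAt (fun z => log (z + j)) (x + j)⁻¹ x := fun j _ =>
    (((hasDerivAt_id x).add_const (j : ℝ)).log (by positivity)).congr_deriv (by simp)
  have h := (((hasDerivAt_id x).mul_const (log n)).add_const (log n.factorial)).fun_sub
    (HasDerivAt.fun_sum hlog)
  rwa [one_mul] at h

theorem digamma_sub_digamma {x y : ℝ} (hx : 0 < x) (hxy : x ≤ y) :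
    digamma y - digamma x = ∑' j : ℕ, ((x + j)⁻¹ - (y + j)⁻¹) := by
  obtain ⟨a, ha, rfl⟩ : ∃ a, 0 ≤ a ∧ y = x + a := ⟨y - x, by linarith, by ring⟩
  have hpos : ∀ z ∈ Set.Ioi (x / 2), 0 < z := fun z hz => (by positivity : 0 < x / 2).trans hz
  have hbound : ∀ (j : ℕ), ∀ z ∈ Set.Ioi (x / 2),
      ‖(z + j)⁻¹ - (z + a + j)⁻¹‖ ≤ a * ((x / 2 + j) ^ 2)⁻¹ := by
    intro j z hz
    have hzj : 0 < z + j := by have := hpos z hz; positivity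
    have hlow := le_inv_pow_sub_inv_pow 1 hzj ha
    have hup := inv_pow_sub_inv_pow_le 1 hzj ha
    simp only [pow_one, Nat.cast_one, mul_one, Nat.reduceAdd, add_right_comm z (j : ℝ) a]
      at hlow hup
    rw [Real.norm_eq_abs, abs_of_nonneg ((by positivity : 0 ≤ a * ((z + a + j) ^ 2)⁻¹).trans hlow)]
    refine hup.trans ?_
    gcongr
    exact (hz : x / 2 < z).le
  have hunif : TendstoUniformlyOn
      (fun n (z : ℝ) => ∑ j ∈ range (n + 1), ((z + j)⁻¹ - (z + a + j)⁻¹))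
      (fun z => ∑' j : ℕ, ((z + j)⁻¹ - (z + a + j)⁻¹)) atTop (Set.Ioi (x / 2)) :=
    fun v hv => (tendsto_add_atTop_nat 1).eventually <| tendstoUniformlyOn_tsum_nat
      ((summable_inv_add_pow (by positivity) le_rfl).mul_left a) hbound v hv
  have hderiv : ∀ᶠ n in atTop, ∀ z ∈ Set.Ioi (x / 2),
      HasDerivAt (fun w : ℝ => BohrMollerup.logGammaSeq (w + a) n - BohrMollerup.logGammaSeq w n)
        (∑ j ∈ range (n + 1), ((z + j)⁻¹ - (z + a + j)⁻¹)) z :=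
    Eventually.of_forall fun n z hz => by
      have hz0 := hpos z hz
      refine (((hasDerivAt_logGammaSeq n (by linarith : 0 < z + a)).comp_add_const z a).fun_sub
        (hasDerivAt_logGammaSeq n hz0)).congr_deriv ?_
      rw [sum_sub_distrib]
      ring
  have hlim : ∀ z ∈ Set.Ioi (x / 2),
      Tendsto (fun n => BohrMollerup.logGammaSeq (z + a) n - BohrMollerup.logGammaSeq z n) atTop
        (𝓝 (log (Gamma (z + a)) - log (Gamma z))) := fun z hz =>
    (BohrMollerup.tendsto_log_gamma (by linarith [hpos z hz])).sub
      (BohrMollerup.tendsto_log_gamma (hpos z hz))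
  have hseries := hasDerivAt_of_tendstoUniformlyOn isOpen_Ioi hunif hderiv hlim
    (show x / 2 < x by linarith)
  exact (((hasDerivAt_log_Gamma (by linarith)).comp_add_const x a).sub
    (hasDerivAt_log_Gamma hx)).unique hseries

-- The `k`-th derivative of `z ↦ (z + j)⁻¹`; for `k ≥ 1`, `ψ^(k) = -∑' j, polygammaTerm k j`.
noncomputable def polygammaTerm (k j : ℕ) (z : ℝ) : ℝ :=
  (-1) ^ k * k.factorial * ((z + j) ^ (k + 1))⁻¹

lemma hasDerivAt_polygammaTerm (k j : ℕ) {z : ℝ} (hz : 0 < z) :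
    HasDerivAt (polygammaTerm k j) (polygammaTerm (k + 1) j z) z := by
  refine (((hasDerivAt_inv_pow (k + 1) (by positivity : z + j ≠ 0)).comp_add_const z
    (j : ℝ)).const_mul ((-1) ^ k * k.factorial : ℝ)).congr_deriv ?_
  simp only [polygammaTerm, Nat.factorial_succ]
  push_cast
  ring

lemma abs_polygammaTerm_le (k j : ℕ) {c z : ℝ} (hc : 0 < c) (hcz : c ≤ z) :
    |polygammaTerm k j z| ≤ k.factorial * ((c + j) ^ (k + 1))⁻¹ := by
  have hz : 0 < z := hc.trans_le hcz
  rw [polygammaTerm, abs_mul, abs_mul, abs_pow, abs_neg, abs_one, one_pow, one_mul, Nat.abs_cast,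
    abs_inv, abs_of_pos (by positivity)]
  gcongr

lemma summable_polygammaTerm {k : ℕ} (hk : 1 ≤ k) {z : ℝ} (hz : 0 < z) :
    Summable fun j => polygammaTerm k j z :=
  (summable_inv_add_pow hz (by omega)).mul_left _

lemma iteratedDeriv_succ_digamma {k : ℕ}
    (hk : ∀ {x y : ℝ}, 0 < x → x ≤ y → iteratedDeriv k digamma y - iteratedDeriv k digamma x =
      ∑' j : ℕ, (polygammaTerm k j x - polygammaTerm k j y))
    {y : ℝ} (hy : 0 < y) :
    iteratedDeriv (k + 1) digamma y = -∑' j : ℕ, polygammaTerm (k + 1) j y := by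
  -- The base point `y / 2` lies in the domain `Ioi (y / 4)`, and there the series vanishes.
  have hseries : HasDerivAt (fun z => ∑' j : ℕ, (polygammaTerm k j (y / 2) - polygammaTerm k j z))
      (∑' j : ℕ, -polygammaTerm (k + 1) j y) y :=
    hasDerivAt_tsum_of_isPreconnected (t := Set.Ioi (y / 4)) (y₀ := y / 2)
      (u := fun j : ℕ => (k + 1).factorial * ((y / 4 + j) ^ (k + 1 + 1))⁻¹)
      ((summable_inv_add_pow (by positivity) (by omega)).mul_left _)
      isOpen_Ioi isPreconnected_Ioi
      (fun j z hz =>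
        (hasDerivAt_polygammaTerm k j ((by positivity : 0 < y / 4).trans hz)).const_sub _)
      (fun j z hz => by
        rw [norm_neg, Real.norm_eq_abs]
        exact abs_polygammaTerm_le _ _ (by positivity) (hz : y / 4 < z).le)
      (show y / 4 < y / 2 by linarith) (by simp) (show y / 4 < y by linarith)
  have hlocal : iteratedDeriv k digamma =ᶠ[𝓝 y] fun z => iteratedDeriv k digamma (y / 2) +
      ∑' j : ℕ, (polygammaTerm k j (y / 2) - polygammaTerm k j z) := by
    filter_upwards [lt_mem_nhds (show y / 2 < y by linarith)] with z hz
    rw [← hk (by positivity) hz.le]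
    ring
  rw [iteratedDeriv_succ, hlocal.deriv_eq, (hseries.const_add _).deriv, tsum_neg]

theorem iteratedDeriv_digamma_sub (k : ℕ) {x y : ℝ} (hx : 0 < x) (hxy : x ≤ y) :
    iteratedDeriv k digamma y - iteratedDeriv k digamma x =
      ∑' j : ℕ, (polygammaTerm k j x - polygammaTerm k j y) := by
  induction k generalizing x y with
  | zero => simpa [polygammaTerm] using digamma_sub_digamma hx hxy
  | succ k ih =>
    have hy := hx.trans_le hxy
    rw [iteratedDeriv_succ_digamma ih hy, iteratedDeriv_succ_digamma ih hx,
      (summable_polygammaTerm (by omega) hx).tsum_sub (summable_polygammaTerm (by omega) hy)]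
    ring

theorem stmt13 (k : ℕ) (a : ℝ) (ha : 0 ≤ a) :
    Filter.Tendsto
      (fun x : ℝ => x ^ (k + 1) * (iteratedDeriv k digamma (x + a) - iteratedDeriv k digamma x))
      Filter.atTop (nhds ((-1) ^ k * (k.factorial : ℝ) * a)) := by
  refine ((tendsto_pow_mul_tsum_inv_pow_sub (by omega : 1 ≤ k + 1) ha).const_mul
    ((-1) ^ k * k.factorial : ℝ)).congr' ?_
  filter_upwards [eventually_gt_atTop 0] with x hx
  rw [iteratedDeriv_digamma_sub k hx (by linarith), mul_left_comm, ← tsum_mul_left]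
  congr 1
  exact tsum_congr fun j => by simp only [polygammaTerm]; ring
end

section
/- Let n, r ≥ 1 be integers and α_1, ..., α_{r+1} positive reals with ∑ α_i = n. Then for any ℓ ≥ 2 and positive reals x_1, ..., x_ℓ, the function Q(x) = Γ(xn + 1)/∏_{i=1}^{r+1} Γ(x α_i + 1) satisfies ∏_{k=1}^ℓ Q(x_k) < Q(∑_{k=1}^ℓ x_k). -/
/-!
Write `log Q(t) = log Γ(t n + 1) - ∑ i, log Γ(t α_i + 1)`. Gauss's limit formula for `Γ`
expands it as `∑ m, (∑ i, log (1 + t α_i / (m + 1)) - log (1 + t n / (m + 1)))`, and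
Frullani's integral turns the `m`-th term into `∫₀^∞ A(w) e^{-(m+1) w / t} dw / w`, where
`A(w) = ∑ i, (1 - e^{-α_i w}) - (1 - e^{-n w})` is positive because `x ↦ 1 - e^{-x}` is
strictly subadditive. Summing the geometric series gives
`log Q(t) = ∫₀^∞ A(w) / w · (e^{w/t} - 1)⁻¹ dw`, and `t ↦ (e^{w/t} - 1)⁻¹` is strictly
superadditive since `λ ↦ (e^λ - 1) / λ` is increasing. So `log Q` is strictly superadditive
on `(0, ∞)`.
-/

open Real MeasureTheory Filter Topology Finset Set

theorem Finset.sum_lt_of_superadditive {ι : Type*} {f : ℝ → ℝ}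
    (hf : ∀ x y, 0 < x → 0 < y → f x + f y < f (x + y)) {s : Finset ι} (hs : 1 < #s)
    {x : ι → ℝ} (hx : ∀ i ∈ s, 0 < x i) : ∑ i ∈ s, f (x i) < f (∑ i ∈ s, x i) := by
  classical
  obtain ⟨i, hi⟩ := card_pos.mp (zero_lt_one.trans hs)
  have hne : (s.erase i).Nonempty := by rw [← card_pos, card_erase_of_mem hi]; omega
  have hx' : ∀ j ∈ s.erase i, 0 < x j := fun j hj => hx j (mem_of_mem_erase hj)
  have hsuper : ∑ j ∈ s.erase i, f (x j) ≤ f (∑ j ∈ s.erase i, x j) := by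
    simpa only [sum_neg_distrib, neg_le_neg_iff] using
      le_sum_nonempty_of_subadditive_on_pred (fun z => -f z) (0 < ·)
        (fun a b ha hb => by linarith [hf a b ha hb]) (fun _ _ => add_pos) x _ hne hx'
  rw [← add_sum_erase s _ hi, ← add_sum_erase s _ hi]
  calc f (x i) + ∑ j ∈ s.erase i, f (x j)
      ≤ f (x i) + f (∑ j ∈ s.erase i, x j) := by gcongr
    _ < _ := hf _ _ (hx i hi) (sum_pos hx' hne)

theorem Real.log_one_add_sum_le {ι : Type*} {s : Finset ι} {x : ι → ℝ}
    (hx : ∀ i ∈ s, 0 ≤ x i) :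
    log (1 + ∑ i ∈ s, x i) ≤ ∑ i ∈ s, log (1 + x i) := by
  refine le_sum_of_subadditive_on_pred (fun z => log (1 + z)) (0 ≤ ·) (by simp)
    (fun a b ha hb => ?_) (fun _ _ => add_nonneg) x hx
  rw [← log_mul (by positivity) (by positivity)]
  exact log_le_log (by positivity) (by nlinarith)

theorem Real.one_sub_exp_neg_add (a b : ℝ) :
    1 - exp (-(a + b)) =
      (1 - exp (-a)) + (1 - exp (-b)) - (1 - exp (-a)) * (1 - exp (-b)) := by
  rw [neg_add, exp_add]; ring

theorem Real.one_sub_exp_neg_sum_le {ι : Type*} {s : Finset ι} {a : ι → ℝ}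
    (ha : ∀ i ∈ s, 0 ≤ a i) :
    1 - exp (-∑ i ∈ s, a i) ≤ ∑ i ∈ s, (1 - exp (-a i)) := by
  refine le_sum_of_subadditive_on_pred (fun z => 1 - exp (-z)) (0 ≤ ·) (by simp)
    (fun x y hx hy => ?_) (fun _ _ => add_nonneg) a ha
  have : 0 ≤ (1 - exp (-x)) * (1 - exp (-y)) := by
    apply mul_nonneg <;> simpa
  simp only [one_sub_exp_neg_add]
  linarith

theorem Real.one_sub_exp_neg_sum_lt {ι : Type*} {s : Finset ι} (hs : 1 < #s) {a : ι → ℝ}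
    (ha : ∀ i ∈ s, 0 < a i) : 1 - exp (-∑ i ∈ s, a i) < ∑ i ∈ s, (1 - exp (-a i)) := by
  have := sum_lt_of_superadditive (f := fun z => -(1 - exp (-z))) (fun x y hx hy => by
    have : 0 < (1 - exp (-x)) * (1 - exp (-y)) := mul_pos (by simpa using hx) (by simpa using hy)
    simp only [one_sub_exp_neg_add]
    linarith) hs ha
  simpa only [sum_neg_distrib, neg_lt_neg_iff] using this

theorem Real.exp_sub_one_div_lt_exp_sub_one_div {p q : ℝ} (hp : 0 < p) (hpq : p < q) :
    (exp p - 1) / p < (exp q - 1) / q := by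
  simpa using strictConvexOn_exp.secant_strict_mono (a := 0) (mem_univ _) (mem_univ p)
    (mem_univ q) hp.ne' (hp.trans hpq).ne' hpq

theorem Real.inv_exp_div_sub_one_add_lt {w x y : ℝ} (hw : 0 < w) (hx : 0 < x) (hy : 0 < y) :
    (exp (w / x) - 1)⁻¹ + (exp (w / y) - 1)⁻¹ < (exp (w / (x + y)) - 1)⁻¹ := by
  set φ : ℝ → ℝ := fun p => (exp p - 1) / p
  have hφ : ∀ p, 0 < p → 0 < φ p := fun p hp => div_pos (by simpa using hp) hp
  have hinv : ∀ z, 0 < z → (exp (w / z) - 1)⁻¹ = z / (w * φ (w / z)) := by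
    intro z hz
    simp only [φ]
    field_simp
  have hxy : 0 < x + y := add_pos hx hy
  have hlt : ∀ z, 0 < z → z < x + y →
      (exp (w / z) - 1)⁻¹ < z / (w * φ (w / (x + y))) := by
    intro z hz hzxy
    rw [hinv z hz]
    have := hφ _ (div_pos hw hxy)
    gcongr
    exact exp_sub_one_div_lt_exp_sub_one_div (div_pos hw hxy)
      (div_lt_div_of_pos_left hw hz hzxy)
  calc _ < x / (w * φ (w / (x + y))) + y / (w * φ (w / (x + y))) :=
        add_lt_add (hlt x hx (by linarith)) (hlt y hy (by linarith))
    _ = _ := by rw [hinv _ hxy, add_div]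

theorem Real.sum_range_log_add_one (N : ℕ) :
    ∑ m ∈ range N, log ((m : ℝ) + 1) = log N.factorial := by
  rw [← log_prod (fun m _ => by positivity), ← prod_range_add_one_eq_factorial]
  push_cast; rfl

/-- Gauss's limit formula for `Γ (s + 1)`, in logarithmic form. -/
theorem Real.tendsto_sum_log_one_add_div_sub_mul_log {s : ℝ} (hs : 0 ≤ s) :
    Tendsto (fun N : ℕ => ∑ m ∈ range N, log (1 + s / (m + 1)) - s * log N) atTop
      (𝓝 (-log (Gamma (s + 1)))) := by
  rw [← tendsto_add_atTop_iff_nat 1]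
  have hlim := (BohrMollerup.tendsto_log_gamma (x := s + 1) (by linarith)).neg.sub
    (tendsto_log_nat_add_one_sub_log.const_mul (s + 1))
  rw [mul_zero, sub_zero] at hlim
  refine hlim.congr fun N => ?_
  have hterm : ∀ m : ℕ, log (1 + s / (m + 1)) = log (s + 1 + m) - log ((m : ℝ) + 1) := by
    intro m
    rw [← log_div (by positivity) (by positivity)]
    congr 1
    field_simp
    ring
  simp only [hterm, sum_sub_distrib, sum_range_log_add_one, BohrMollerup.logGammaSeq,
    Nat.factorial_succ]
  push_cast
  rw [log_mul (by positivity) (by positivity)]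
  ring

theorem Real.lintegral_exp_neg_mul_Ioi {s : ℝ} (hs : 0 < s) :
    ∫⁻ w in Ioi 0, ENNReal.ofReal (exp (-s * w)) = ENNReal.ofReal s⁻¹ := by
  rw [← ofReal_integral_eq_lintegral_ofReal (integrableOn_exp_mul_Ioi (neg_neg_of_pos hs) 0)
    (ae_of_all _ fun _ => (exp_pos _).le), integral_exp_mul_Ioi (neg_neg_of_pos hs)]
  simp

theorem Real.integral_Ioc_exp_neg_mul {w a b : ℝ} (hw : 0 < w) (hab : a ≤ b) :
    ∫ s in Ioc a b, exp (-s * w) = (exp (-a * w) - exp (-b * w)) / w := by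
  rw [← intervalIntegral.integral_of_le hab]
  simp only [neg_mul]
  rw [intervalIntegral.integral_comp_mul_right (fun u => exp (-u)) hw.ne',
    intervalIntegral.integral_comp_neg, integral_exp, smul_eq_mul]
  field_simp

theorem Real.lintegral_exp_neg_mul_sub_exp_neg_mul_div {a b : ℝ} (ha : 0 < a) (hab : a ≤ b) :
    ∫⁻ w in Ioi 0, ENNReal.ofReal ((exp (-a * w) - exp (-b * w)) / w) =
      ENNReal.ofReal (log (b / a)) := by
  have hb : 0 < b := ha.trans_le hab
  calc _ = ∫⁻ w in Ioi 0, ∫⁻ s in Ioc a b, ENNReal.ofReal (exp (-s * w)) := by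
        refine setLIntegral_congr_fun measurableSet_Ioi fun w hw => ?_
        rw [← integral_Ioc_exp_neg_mul hw hab, ofReal_integral_eq_lintegral_ofReal
          ((by fun_prop : Continuous fun s => exp (-s * w)).integrableOn_Icc.mono_set
            Ioc_subset_Icc_self)
          (ae_of_all _ fun _ => (exp_pos _).le)]
    _ = ∫⁻ s in Ioc a b, ∫⁻ w in Ioi 0, ENNReal.ofReal (exp (-s * w)) :=
        lintegral_lintegral_swap (by fun_prop)
    _ = ∫⁻ s in Ioc a b, ENNReal.ofReal s⁻¹ :=
        setLIntegral_congr_fun measurableSet_Ioc fun s hs =>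
          lintegral_exp_neg_mul_Ioi (ha.trans hs.1)
    _ = ENNReal.ofReal (log (b / a)) := by
        rw [← ofReal_integral_eq_lintegral_ofReal, ← intervalIntegral.integral_of_le hab,
          integral_inv_of_pos ha hb]
        · exact ((continuousOn_inv₀.mono fun s hs => (ha.trans_le hs.1).ne').integrableOn_Icc
            ).mono_set Ioc_subset_Icc_self
        · exact (ae_restrict_iff' measurableSet_Ioc).2 (ae_of_all _ fun s hs =>
            inv_nonneg.2 (ha.trans hs.1).le)

theorem Real.hasSum_exp_neg_nat_add_one_div_mul {t w : ℝ} (ht : 0 < t) (hw : 0 < w) :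
    HasSum (fun m : ℕ => exp (-((m + 1) / t) * w)) (exp (w / t) - 1)⁻¹ := by
  set q := exp (-(w / t))
  have hq0 : 0 ≤ q := (exp_pos _).le
  have hq : q < 1 := exp_lt_one_iff.2 (neg_neg_of_pos (div_pos hw ht))
  have hterm : ∀ m : ℕ, exp (-((m + 1) / t) * w) = q * q ^ m := fun m => by
    rw [← exp_nat_mul, ← exp_add]
    congr 1
    field_simp
    ring
  have hsum : q * (1 - q)⁻¹ = (exp (w / t) - 1)⁻¹ := by
    have : 1 < exp (w / t) := one_lt_exp_iff.2 (div_pos hw ht)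
    simp only [q, exp_neg]
    field_simp
  simpa only [hterm, hsum] using (hasSum_geometric_of_lt_one hq0 hq).mul_left q

section Multinomial

variable {ι : Type*} [Fintype ι]

noncomputable def logMultinomial (α : ι → ℝ) (t : ℝ) : ℝ :=
  log (Gamma (t * ∑ i, α i + 1)) - ∑ i, log (Gamma (t * α i + 1))

noncomputable def multinomialLogTerm (α : ι → ℝ) (c : ℝ) : ℝ :=
  ∑ i, log (1 + α i / c) - log (1 + (∑ i, α i) / c)

noncomputable def expDefect (α : ι → ℝ) (w : ℝ) : ℝ :=
  ∑ i, (1 - exp (-(α i * w))) - (1 - exp (-((∑ i, α i) * w)))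

variable {α : ι → ℝ}

@[fun_prop]
theorem continuous_expDefect : Continuous (expDefect α) := by
  unfold expDefect
  fun_prop

theorem exp_logMultinomial (hα : ∀ i, 0 ≤ α i) {t : ℝ} (ht : 0 ≤ t) :
    exp (logMultinomial α t) = Gamma (t * ∑ i, α i + 1) / ∏ i, Gamma (t * α i + 1) := by
  have hΓ : ∀ s, 0 ≤ s → 0 < Gamma (s + 1) := fun s hs => Gamma_pos_of_pos (by linarith)
  rw [logMultinomial, exp_sub, exp_sum,
    exp_log (hΓ _ (mul_nonneg ht (sum_nonneg fun i _ => hα i))),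
    prod_congr rfl fun i _ => exp_log (hΓ _ (mul_nonneg ht (hα i)))]

theorem multinomialLogTerm_nonneg (hα : ∀ i, 0 ≤ α i) {c : ℝ} (hc : 0 < c) :
    0 ≤ multinomialLogTerm α c := by
  have := log_one_add_sum_le (s := univ) (x := fun i => α i / c)
    (fun i _ => div_nonneg (hα i) hc.le)
  rw [← sum_div] at this
  exact sub_nonneg.2 this

theorem hasSum_multinomialLogTerm (hα : ∀ i, 0 ≤ α i) {t : ℝ} (ht : 0 < t) :
    HasSum (fun m : ℕ => multinomialLogTerm α ((m + 1) / t)) (logMultinomial α t) := by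
  rw [hasSum_iff_tendsto_nat_of_nonneg fun m => multinomialLogTerm_nonneg hα (by positivity)]
  have hlim := (tendsto_finsetSum univ fun i _ =>
      tendsto_sum_log_one_add_div_sub_mul_log (mul_nonneg ht.le (hα i))).sub
    (tendsto_sum_log_one_add_div_sub_mul_log
      (mul_nonneg ht.le (sum_nonneg fun i (_ : i ∈ Finset.univ) => hα i)))
  convert hlim using 1
  · ext N
    simp only [multinomialLogTerm, div_div_eq_mul_div, sum_sub_distrib, ← sum_mul, ← mul_sum]
    rw [sum_comm]
    simp only [mul_comm t]
    ring
  · simp only [logMultinomial, sum_neg_distrib]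
    congr 1
    ring

theorem expDefect_nonneg (hα : ∀ i, 0 ≤ α i) {w : ℝ} (hw : 0 ≤ w) :
    0 ≤ expDefect α w := by
  have := one_sub_exp_neg_sum_le (s := univ) (a := fun i => α i * w)
    fun i _ => mul_nonneg (hα i) hw
  rw [← sum_mul] at this
  exact sub_nonneg.2 this

theorem expDefect_pos (hι : 1 < Fintype.card ι) (hα : ∀ i, 0 < α i) {w : ℝ} (hw : 0 < w) :
    0 < expDefect α w := by
  have := one_sub_exp_neg_sum_lt (s := univ) (a := fun i => α i * w) hι
    fun i _ => mul_pos (hα i) hw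
  rw [← sum_mul] at this
  exact sub_pos.2 this

theorem lintegral_expDefect_div_mul_exp_neg_mul (hα : ∀ i, 0 ≤ α i) {c : ℝ} (hc : 0 < c) :
    ∫⁻ w in Ioi 0, ENNReal.ofReal (expDefect α w / w * exp (-c * w)) =
      ENNReal.ofReal (multinomialLogTerm α c) := by
  set g : ℝ → ℝ → ℝ := fun β w => (exp (-c * w) - exp (-(c + β) * w)) / w
  have hg_nonneg : ∀ β, 0 ≤ β → ∀ w, 0 < w → 0 ≤ g β w := fun β hβ w hw =>
    div_nonneg (sub_nonneg.2 (exp_le_exp.2 (by nlinarith))) hw.le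
  have hg : ∀ β, 0 ≤ β → ∫⁻ w in Ioi 0, ENNReal.ofReal (g β w) =
      ENNReal.ofReal (log (1 + β / c)) := fun β hβ => by
    rw [lintegral_exp_neg_mul_sub_exp_neg_mul_div hc (by linarith), add_div, div_self hc.ne']
  have hν : 0 ≤ ∑ i, α i := sum_nonneg fun i _ => hα i
  have hdecomp : EqOn
      (fun w => ENNReal.ofReal (expDefect α w / w * exp (-c * w)) +
        ENNReal.ofReal (g (∑ i, α i) w))
      (fun w => ∑ i, ENNReal.ofReal (g (α i) w)) (Ioi 0) := by
    intro w hw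
    dsimp only
    rw [← ENNReal.ofReal_add (mul_nonneg (div_nonneg (expDefect_nonneg hα (le_of_lt hw))
      (le_of_lt hw)) (exp_pos _).le) (hg_nonneg _ hν w hw),
      ← ENNReal.ofReal_sum_of_nonneg fun i _ => hg_nonneg _ (hα i) w hw]
    have hsplit : ∀ β, exp (-(c + β) * w) = exp (-c * w) * exp (-(β * w)) := fun β => by
      rw [← exp_add]
      ring_nf
    congr 1
    simp only [g, expDefect, hsplit, ← mul_one_sub, ← sum_div, ← mul_sum]
    ring
  have hlog : ∀ β, 0 ≤ β → 0 ≤ log (1 + β / c) := fun β hβ =>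
    log_nonneg (le_add_of_nonneg_right (div_nonneg hβ hc.le))
  have hmeas : ∀ β, Measurable fun w => ENNReal.ofReal (g β w) := fun β => by fun_prop
  -- Only nonnegative terms are added in `ℝ≥0∞`, so no integrability needs checking; the
  -- finite `log (1 + (∑ i, α i) / c)` is cancelled at the end.
  have hadd : (∫⁻ w in Ioi 0, ENNReal.ofReal (expDefect α w / w * exp (-c * w))) +
      ENNReal.ofReal (log (1 + (∑ i, α i) / c)) =
        ENNReal.ofReal (∑ i, log (1 + α i / c)) := by
    rw [← hg _ hν, ← lintegral_add_right _ (hmeas _),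
      setLIntegral_congr_fun measurableSet_Ioi hdecomp, lintegral_finsetSum _ fun i _ => hmeas _,
      ENNReal.ofReal_sum_of_nonneg fun i _ => hlog _ (hα i)]
    exact sum_congr rfl fun i _ => hg _ (hα i)
  rw [multinomialLogTerm, ENNReal.ofReal_sub _ (hlog _ hν)]
  exact ENNReal.eq_sub_of_add_eq ENNReal.ofReal_ne_top hadd

theorem ofReal_logMultinomial_eq_lintegral (hα : ∀ i, 0 ≤ α i) {t : ℝ} (ht : 0 < t) :
    ENNReal.ofReal (logMultinomial α t) =
      ∫⁻ w in Ioi 0, ENNReal.ofReal (expDefect α w / w * (exp (w / t) - 1)⁻¹) := by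
  have hsum := hasSum_multinomialLogTerm hα ht
  calc ENNReal.ofReal (logMultinomial α t)
      = ∑' m : ℕ, ENNReal.ofReal (multinomialLogTerm α ((m + 1) / t)) := by
        rw [← hsum.tsum_eq, ENNReal.ofReal_tsum_of_nonneg
          (fun m => multinomialLogTerm_nonneg hα (by positivity)) hsum.summable]
    _ = ∑' m : ℕ, ∫⁻ w in Ioi 0,
          ENNReal.ofReal (expDefect α w / w * exp (-((m + 1) / t) * w)) := by
        congr with m
        rw [lintegral_expDefect_div_mul_exp_neg_mul hα (by positivity)]
    _ = ∫⁻ w in Ioi 0, ∑' m : ℕ,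
          ENNReal.ofReal (expDefect α w / w * exp (-((m + 1) / t) * w)) :=
        (lintegral_tsum fun m => by fun_prop).symm
    _ = _ := setLIntegral_congr_fun measurableSet_Ioi fun w hw => by
        have hgeo := (hasSum_exp_neg_nat_add_one_div_mul ht hw).mul_left (expDefect α w / w)
        rw [← ENNReal.ofReal_tsum_of_nonneg (fun m => mul_nonneg
          (div_nonneg (expDefect_nonneg hα (le_of_lt hw)) (le_of_lt hw)) (exp_pos _).le)
          hgeo.summable, hgeo.tsum_eq]

theorem logMultinomial_add_lt (hι : 1 < Fintype.card ι) (hα : ∀ i, 0 < α i) {x y : ℝ}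
    (hx : 0 < x) (hy : 0 < y) :
    logMultinomial α x + logMultinomial α y < logMultinomial α (x + y) := by
  have hα' : ∀ i, 0 ≤ α i := fun i => (hα i).le
  set K : ℝ → ℝ → ℝ := fun t w => expDefect α w / w * (exp (w / t) - 1)⁻¹
  have hK : ∀ t, 0 < t → ∀ w, 0 < w → 0 ≤ K t w := fun t ht w hw =>
    mul_nonneg (div_nonneg (expDefect_nonneg hα' hw.le) hw.le)
      (inv_nonneg.2 (sub_nonneg.2 (one_le_exp (div_pos hw ht).le)))
  have hmeas : ∀ t, Measurable fun w => ENNReal.ofReal (K t w) := fun t => by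
    simp only [K]
    fun_prop
  refine (ENNReal.ofReal_lt_ofReal_iff'.1 ?_).1
  calc ENNReal.ofReal (logMultinomial α x + logMultinomial α y)
      ≤ ENNReal.ofReal (logMultinomial α x) + ENNReal.ofReal (logMultinomial α y) :=
        ENNReal.ofReal_add_le
    _ = ∫⁻ w in Ioi 0, (ENNReal.ofReal (K x w) + ENNReal.ofReal (K y w)) := by
        rw [ofReal_logMultinomial_eq_lintegral hα' hx, ofReal_logMultinomial_eq_lintegral hα' hy,
          lintegral_add_left (hmeas x)]
    _ < ∫⁻ w in Ioi 0, ENNReal.ofReal (K (x + y) w) := by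
        refine lintegral_strict_mono (by simp) (hmeas _).aemeasurable ?_
          ((ae_restrict_iff' measurableSet_Ioi).2 (ae_of_all _ fun w hw => ?_))
        · rw [lintegral_add_left (hmeas x), ← ofReal_logMultinomial_eq_lintegral hα' hx,
            ← ofReal_logMultinomial_eq_lintegral hα' hy]
          exact ENNReal.add_ne_top.2 ⟨ENNReal.ofReal_ne_top, ENNReal.ofReal_ne_top⟩
        · rw [← ENNReal.ofReal_add (hK x hx w hw) (hK y hy w hw),
            ENNReal.ofReal_lt_ofReal_iff_of_nonneg (add_nonneg (hK x hx w hw) (hK y hy w hw))]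
          simp only [K, ← mul_add]
          exact mul_lt_mul_of_pos_left (inv_exp_div_sub_one_add_lt hw hx hy)
            (div_pos (expDefect_pos hι hα hw) hw)
    _ = ENNReal.ofReal (logMultinomial α (x + y)) :=
        (ofReal_logMultinomial_eq_lintegral hα' (add_pos hx hy)).symm

end Multinomial

theorem stmt17_general (n r : ℕ) (hr : 1 ≤ r)
    (α : Fin (r + 1) → ℝ) (hα : ∀ i, 0 < α i) (hsum : ∑ i, α i = n)
    (Q : ℝ → ℝ) (hQ : ∀ x, Q x = Real.Gamma (x * n + 1) / ∏ i, Real.Gamma (x * α i + 1))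
    (ℓ : ℕ) (hℓ : 2 ≤ ℓ) (x : Fin ℓ → ℝ) (hx : ∀ k, 0 < x k) :
    ∏ k, Q (x k) < Q (∑ k, x k) := by
  have hQ_exp : ∀ t, 0 < t → Q t = exp (logMultinomial α t) := fun t ht => by
    rw [hQ, ← hsum, exp_logMultinomial (fun i => (hα i).le) ht.le]
  have hℓ' : (univ : Finset (Fin ℓ)).Nonempty := univ_nonempty_iff.2 ⟨⟨0, by omega⟩⟩
  rw [hQ_exp _ (sum_pos (fun k _ => hx k) hℓ'), prod_congr rfl fun k _ => hQ_exp _ (hx k),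
    ← exp_sum, exp_lt_exp]
  exact sum_lt_of_superadditive
    (fun a b => logMultinomial_add_lt (by simp only [Fintype.card_fin]; omega) hα)
    (by simp only [card_univ, Fintype.card_fin]; omega) fun k _ => hx k

theorem stmt17 (n r : ℕ) (hn : 1 ≤ n) (hr : 1 ≤ r)
    (α : Fin (r + 1) → ℝ) (hα : ∀ i, 0 < α i) (hsum : ∑ i, α i = n)
    (Q : ℝ → ℝ) (hQ : ∀ x, Q x = Real.Gamma (x * n + 1) / ∏ i, Real.Gamma (x * α i + 1))
    (ℓ : ℕ) (hℓ : 2 ≤ ℓ) (x : Fin ℓ → ℝ) (hx : ∀ k, 0 < x k) :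
    ∏ k, Q (x k) < Q (∑ k, x k) :=
  stmt17_general n r hr α hα hsum Q hQ ℓ hℓ x hx
end

section
/- Let n, r ≥ 1 be integers and α_1, ..., α_{r+1} positive reals with ∑ α_i = n, and let Q(x) = Γ(xn + 1)/∏_{i=1}^{r+1} Γ(x α_i + 1). If 0 < x_1 ≤ x_3 and x_2 > 0, then Q(x_1 + x_2) Q(x_3) ≤ Q(x_1) Q(x_2 + x_3), with equality if and only if x_1 = x_3. -/
/-!
Gauss's product `log Γ = lim logGammaSeq` turns the four-term combination
`T a = log Γ(x₁a+1) + log Γ((x₂+x₃)a+1) - log Γ((x₁+x₂)a+1) - log Γ(x₃a+1)` into the series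
`∑_{k ≥ 1} χ (k / a)` with `χ m = log ((x₁+x₂+m)(x₃+m) / ((x₁+m)(x₂+x₃+m)))`, which is
nonnegative and, for `x₁ < x₃`, strictly decreasing in `m`. For such `χ` the series is strictly superadditive in `a`:
the points of `ℕ⁺/u` and of `ℕ⁺/v` can be matched injectively with smaller points of `ℕ⁺/(u+v)`.
Hence `∑ T αᵢ < T (∑ αᵢ) = T n`, which is the logarithm of the claimed inequality.
-/

open Real Finset Filter

/-- The `k`-th point `(k + 1) / u` of `ℕ⁺ / u` and the `j`-th point `(j + 1) / v` of `ℕ⁺ / v` are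
sent to points of `ℕ⁺ / (u + v)` lying below them, the first by a floor and the second by a
ceiling; this asymmetry makes the map injective even when `u / v` is rational. -/
noncomputable def mergeIndex (u v : ℝ) : ℕ ⊕ ℕ → ℕ
  | .inl k => ⌊(k + 1) * (u + v) / u⌋₊ - 1
  | .inr j => ⌈(j + 1) * (u + v) / v⌉₊ - 2

lemma floor_sub_one_bounds {x : ℝ} (hx : 1 ≤ x) :
    ((⌊x⌋₊ - 1 : ℕ) : ℝ) + 1 ≤ x ∧ x < ((⌊x⌋₊ - 1 : ℕ) : ℝ) + 2 := by
  have h1 : 1 ≤ ⌊x⌋₊ := (Nat.one_le_floor_iff x).mpr hx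
  rw [Nat.cast_sub h1, Nat.cast_one]
  constructor
  · linarith [Nat.floor_le (zero_le_one.trans hx)]
  · linarith [Nat.lt_floor_add_one x]

lemma ceil_sub_two_bounds {x : ℝ} (hx : 1 < x) :
    ((⌈x⌉₊ - 2 : ℕ) : ℝ) + 1 < x ∧ x ≤ ((⌈x⌉₊ - 2 : ℕ) : ℝ) + 2 := by
  have h2 : 2 ≤ ⌈x⌉₊ := Nat.lt_ceil.mpr (by exact_mod_cast hx)
  rw [Nat.cast_sub h2, Nat.cast_two]
  constructor
  · linarith [Nat.ceil_lt_add_one (zero_le_one.trans hx.le)]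
  · linarith [Nat.le_ceil x]

section mergeIndex

variable {u v : ℝ} (hu : 0 < u) (hv : 0 < v)
include hu hv

lemma mergeIndex_inl_bounds (k : ℕ) :
    (mergeIndex u v (.inl k) + 1) * u ≤ (k + 1) * (u + v) ∧
      (k + 1) * (u + v) < (mergeIndex u v (.inl k) + 2) * u := by
  have hx : 1 ≤ (k + 1) * (u + v) / u := by
    rw [le_div_iff₀ hu]; nlinarith [(Nat.cast_nonneg k : (0 : ℝ) ≤ k)]
  obtain ⟨h1, h2⟩ := floor_sub_one_bounds hx
  rw [le_div_iff₀ hu] at h1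
  rw [div_lt_iff₀ hu] at h2
  exact ⟨h1, h2⟩

lemma mergeIndex_inr_bounds (j : ℕ) :
    (mergeIndex u v (.inr j) + 1) * v < (j + 1) * (u + v) ∧
      (j + 1) * (u + v) ≤ (mergeIndex u v (.inr j) + 2) * v := by
  have hx : 1 < (j + 1) * (u + v) / v := by
    rw [lt_div_iff₀ hv]; nlinarith [(Nat.cast_nonneg j : (0 : ℝ) ≤ j)]
  obtain ⟨h1, h2⟩ := ceil_sub_two_bounds hx
  rw [lt_div_iff₀ hv] at h1
  rw [div_le_iff₀ hv] at h2
  exact ⟨h1, h2⟩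

lemma mergeIndex_injective : Function.Injective (mergeIndex u v) := by
  have hinl : ∀ k k', mergeIndex u v (.inl k) = mergeIndex u v (.inl k') → k = k' := by
    intro k k' h
    obtain ⟨h1, h2⟩ := mergeIndex_inl_bounds hu hv k
    obtain ⟨h1', h2'⟩ := mergeIndex_inl_bounds hu hv k'
    rw [h] at h1 h2
    have : k < k' + 1 := by exact_mod_cast (show (k : ℝ) < k' + 1 by nlinarith)
    have : k' < k + 1 := by exact_mod_cast (show (k' : ℝ) < k + 1 by nlinarith)
    omega
  have hinr : ∀ j j', mergeIndex u v (.inr j) = mergeIndex u v (.inr j') → j = j' := by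
    intro j j' h
    obtain ⟨h1, h2⟩ := mergeIndex_inr_bounds hu hv j
    obtain ⟨h1', h2'⟩ := mergeIndex_inr_bounds hu hv j'
    rw [h] at h1 h2
    have : j < j' + 1 := by exact_mod_cast (show (j : ℝ) < j' + 1 by nlinarith)
    have : j' < j + 1 := by exact_mod_cast (show (j' : ℝ) < j + 1 by nlinarith)
    omega
  -- Adding the two bounds puts `(k + j + 2) * (u + v)` strictly between `(M + 1) * (u + v)` and
  -- `(M + 2) * (u + v)`.
  have hmix : ∀ k j, mergeIndex u v (.inl k) ≠ mergeIndex u v (.inr j) := by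
    intro k j h
    obtain ⟨h1, h2⟩ := mergeIndex_inl_bounds hu hv k
    obtain ⟨h1', h2'⟩ := mergeIndex_inr_bounds hu hv j
    set M := mergeIndex u v (.inr j)
    rw [h] at h1 h2
    have : M < k + j + 1 := by exact_mod_cast (show (M : ℝ) < k + j + 1 by nlinarith)
    have : k + j + 1 < M + 1 := by exact_mod_cast (show (k : ℝ) + j + 1 < M + 1 by nlinarith)
    omega
  rintro (k | j) (k' | j') h
  · rw [hinl k k' h]
  · exact absurd h (hmix k j')
  · exact absurd h.symm (hmix k' j)
  · rw [hinr j j' h]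

theorem tsum_add_tsum_lt_tsum_of_strictAntiOn {φ : ℝ → ℝ} (hφ : StrictAntiOn φ (Set.Ioi 0))
    (hφ₀ : ∀ m, 0 < m → 0 ≤ φ m) (hφs : ∀ a, 0 < a → Summable fun k : ℕ ↦ φ ((k + 1) / a)) :
    ∑' k : ℕ, φ ((k + 1) / u) + ∑' k : ℕ, φ ((k + 1) / v) < ∑' k : ℕ, φ ((k + 1) / (u + v)) := by
  have huv : 0 < u + v := add_pos hu hv
  let f : ℕ ⊕ ℕ → ℝ := Sum.elim (fun k ↦ φ ((k + 1) / u)) (fun j ↦ φ ((j + 1) / v))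
  let g : ℕ → ℝ := fun m ↦ φ ((m + 1) / (u + v))
  have hmem : ∀ (m : ℕ) {a : ℝ}, 0 < a → (m + 1) / a ∈ Set.Ioi (0 : ℝ) := fun m a ha ↦
    div_pos (Nat.cast_add_one_pos m) ha
  have hinl : ∀ k, f (.inl k) ≤ g (mergeIndex u v (.inl k)) := fun k ↦
    (hφ.le_iff_ge (hmem _ hu) (hmem _ huv)).mpr <| (div_le_div_iff₀ huv hu).mpr
      (mergeIndex_inl_bounds hu hv k).1
  have hinr : ∀ j, f (.inr j) < g (mergeIndex u v (.inr j)) := fun j ↦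
    hφ (hmem _ huv) (hmem _ hv) <| (div_lt_div_iff₀ huv hv).mpr (mergeIndex_inr_bounds hu hv j).1
  have hg : Summable g := hφs _ huv
  calc ∑' k : ℕ, φ ((k + 1) / u) + ∑' k : ℕ, φ ((k + 1) / v) = ∑' x, f x :=
        (Summable.tsum_sum (f := f) (hφs u hu) (hφs v hv)).symm
    _ < ∑' x, g (mergeIndex u v x) :=
        Summable.tsum_lt_tsum (i := .inr 0) (by rintro (k | j); exacts [hinl k, (hinr j).le])
          (hinr 0) (.sum f (hφs u hu) (hφs v hv)) (hg.comp_injective (mergeIndex_injective hu hv))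
    _ ≤ ∑' m, g m :=
        tsum_comp_le_tsum_of_inj hg (fun m ↦ hφ₀ _ (hmem m huv)) (mergeIndex_injective hu hv)

end mergeIndex

section superadditive

variable {ι : Type*} {F : ℝ → ℝ} (hF : ∀ u v, 0 < u → 0 < v → F u + F v < F (u + v))
  {w : ι → ℝ}
include hF

lemma add_sum_lt_of_superadditive {s : Finset ι} (hs : s.Nonempty) {a : ι} (ha : 0 < w a)
    (hw : ∀ i ∈ s, 0 < w i) : F (w a) + ∑ i ∈ s, F (w i) < F (w a + ∑ i ∈ s, w i) := by
  induction hs using Finset.Nonempty.cons_induction generalizing a with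
  | singleton b => simpa using hF _ _ ha (hw b (mem_singleton_self b))
  | cons b s hb hs ih =>
    have hwb : 0 < w b := hw b (mem_cons_self b s)
    have hws : ∀ i ∈ s, 0 < w i := fun i hi ↦ hw i (mem_cons_of_mem hi)
    rw [sum_cons, sum_cons]
    calc F (w a) + (F (w b) + ∑ i ∈ s, F (w i)) < F (w a) + F (w b + ∑ i ∈ s, w i) := by
          linarith [ih hwb hws]
      _ < F (w a + (w b + ∑ i ∈ s, w i)) := hF _ _ ha (add_pos hwb (sum_pos hws hs))

lemma sum_lt_of_superadditive [Fintype ι] (hι : 1 < Fintype.card ι)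
    (hw : ∀ i, 0 < w i) : ∑ i, F (w i) < F (∑ i, w i) := by
  classical
  obtain ⟨a⟩ : Nonempty ι := Fintype.card_pos_iff.mp (by omega)
  have hs : (univ.erase a).Nonempty := by
    rw [← card_pos, card_erase_of_mem (mem_univ a), card_univ]; omega
  rw [← add_sum_erase _ _ (mem_univ a), ← add_sum_erase _ _ (mem_univ a)]
  exact add_sum_lt_of_superadditive hF hs (hw a) fun i _ ↦ hw i

end superadditive

noncomputable def logCrossRatio (p b q m : ℝ) : ℝ :=
  log ((p + b + m) * (q + m) / ((p + m) * (b + q + m)))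

section logCrossRatio

variable {p b q : ℝ} (hp : 0 < p) (hb : 0 < b)
include hp hb

lemma logCrossRatio_eq_log_one_add (hq : 0 < q) {m : ℝ} (hm : 0 < m) :
    logCrossRatio p b q m = log (1 + b * (q - p) / ((p + m) * (b + q + m))) := by
  have : (p + m) * (b + q + m) ≠ 0 := by positivity
  rw [logCrossRatio]
  congr 1
  field_simp
  ring

lemma logCrossRatio_nonneg (hpq : p ≤ q) {m : ℝ} (hm : 0 < m) : 0 ≤ logCrossRatio p b q m := by
  have hq := hp.trans_le hpq
  rw [logCrossRatio_eq_log_one_add hp hb hq hm]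
  exact log_nonneg (le_add_of_nonneg_right
    (div_nonneg (mul_nonneg hb.le (sub_nonneg.mpr hpq)) (by positivity)))

lemma strictAntiOn_logCrossRatio (hpq : p < q) :
    StrictAntiOn (logCrossRatio p b q) (Set.Ioi 0) := by
  intro m hm m' hm' hmm'
  have hq := hp.trans hpq
  rw [Set.mem_Ioi] at hm hm'
  rw [logCrossRatio_eq_log_one_add hp hb hq hm, logCrossRatio_eq_log_one_add hp hb hq hm']
  have hc : 0 < b * (q - p) := mul_pos hb (sub_pos.mpr hpq)
  exact log_lt_log (add_pos one_pos (div_pos hc (by positivity))) (by gcongr)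

lemma logCrossRatio_div_eq (hq : 0 < q) {a c : ℝ} (ha : 0 < a) (hc : 0 < c) :
    logCrossRatio p b q (c / a) =
      log ((p + b) * a + c) + log (q * a + c) - log (p * a + c) - log ((b + q) * a + c) := by
  have e : (p + b + c / a) * (q + c / a) / ((p + c / a) * (b + q + c / a)) =
      ((p + b) * a + c) * (q * a + c) / ((p * a + c) * ((b + q) * a + c)) := by
    field_simp
  rw [logCrossRatio, e, log_div (by positivity) (by positivity),
    log_mul (by positivity) (by positivity), log_mul (by positivity) (by positivity)]
  ring

lemma sum_logCrossRatio_eq (hq : 0 < q) {a : ℝ} (ha : 0 < a) (N : ℕ) :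
    ∑ k ∈ range (N + 1), logCrossRatio p b q ((k + 1) / a) =
      BohrMollerup.logGammaSeq (p * a + 1) N + BohrMollerup.logGammaSeq ((b + q) * a + 1) N -
        BohrMollerup.logGammaSeq ((p + b) * a + 1) N - BohrMollerup.logGammaSeq (q * a + 1) N := by
  have hk (k : ℕ) : logCrossRatio p b q ((k + 1) / a) = log ((p + b) * a + 1 + k) +
      log (q * a + 1 + k) - log (p * a + 1 + k) - log ((b + q) * a + 1 + k) := by
    rw [logCrossRatio_div_eq hp hb hq ha (Nat.cast_add_one_pos k)]
    simp only [add_assoc, add_comm (k : ℝ)]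
  simp only [hk, BohrMollerup.logGammaSeq, sum_add_distrib, sum_sub_distrib]
  ring

theorem hasSum_logCrossRatio (hpq : p ≤ q) {a : ℝ} (ha : 0 < a) :
    HasSum (fun k : ℕ ↦ logCrossRatio p b q ((k + 1) / a))
      (log (Gamma (p * a + 1)) + log (Gamma ((b + q) * a + 1)) -
        log (Gamma ((p + b) * a + 1)) - log (Gamma (q * a + 1))) := by
  have hq := hp.trans_le hpq
  rw [hasSum_iff_tendsto_nat_of_nonneg
      fun k ↦ logCrossRatio_nonneg hp hb hpq (div_pos (Nat.cast_add_one_pos k) ha),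
    ← tendsto_add_atTop_iff_nat 1]
  simp only [sum_logCrossRatio_eq hp hb hq ha]
  refine (((BohrMollerup.tendsto_log_gamma ?_).add (BohrMollerup.tendsto_log_gamma ?_)).sub
    (BohrMollerup.tendsto_log_gamma ?_)).sub (BohrMollerup.tendsto_log_gamma ?_) <;> positivity

end logCrossRatio

noncomputable def multinomialGamma {ι : Type*} [Fintype ι] (α : ι → ℝ) (x : ℝ) : ℝ :=
  Gamma (x * ∑ i, α i + 1) / ∏ i, Gamma (x * α i + 1)

section multinomialGamma

variable {ι : Type*} [Fintype ι] {α : ι → ℝ} (hα : ∀ i, 0 < α i)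
include hα

lemma multinomialGamma_pos {x : ℝ} (hx : 0 < x) : 0 < multinomialGamma α x := by
  have : 0 ≤ ∑ i, α i := sum_nonneg fun i _ ↦ (hα i).le
  exact div_pos (Gamma_pos_of_pos (by positivity))
    (prod_pos fun i _ ↦ Gamma_pos_of_pos (by have := hα i; positivity))

lemma log_multinomialGamma {x : ℝ} (hx : 0 < x) :
    log (multinomialGamma α x) =
      log (Gamma (x * ∑ i, α i + 1)) - ∑ i, log (Gamma (x * α i + 1)) := by
  have : 0 ≤ ∑ i, α i := sum_nonneg fun i _ ↦ (hα i).le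
  rw [multinomialGamma, log_div (Gamma_pos_of_pos (by positivity)).ne'
    (prod_pos fun i _ ↦ Gamma_pos_of_pos (by have := hα i; positivity)).ne',
    log_prod fun i _ ↦ (Gamma_pos_of_pos (by have := hα i; positivity)).ne']

theorem multinomialGamma_mul_lt (hι : 1 < Fintype.card ι) {x₁ x₂ x₃ : ℝ} (h1 : 0 < x₁)
    (h2 : 0 < x₂) (h13 : x₁ < x₃) :
    multinomialGamma α (x₁ + x₂) * multinomialGamma α x₃ <
      multinomialGamma α x₁ * multinomialGamma α (x₂ + x₃) := by
  have h3 : 0 < x₃ := h1.trans h13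
  have : Nonempty ι := Fintype.card_pos_iff.mp (by omega)
  set T : ℝ → ℝ := fun a ↦ log (Gamma (x₁ * a + 1)) + log (Gamma ((x₂ + x₃) * a + 1)) -
    log (Gamma ((x₁ + x₂) * a + 1)) - log (Gamma (x₃ * a + 1))
  have hT (a : ℝ) (ha : 0 < a) : ∑' k : ℕ, logCrossRatio x₁ x₂ x₃ ((k + 1) / a) = T a :=
    (hasSum_logCrossRatio h1 h2 h13.le ha).tsum_eq
  have hsuper : ∑ i, T (α i) < T (∑ i, α i) := by
    have := sum_lt_of_superadditive (fun u v hu hv ↦ tsum_add_tsum_lt_tsum_of_strictAntiOn hu hv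
      (strictAntiOn_logCrossRatio h1 h2 h13) (fun m hm ↦ logCrossRatio_nonneg h1 h2 h13.le hm)
      fun a ha ↦ (hasSum_logCrossRatio h1 h2 h13.le ha).summable) hι hα
    rwa [sum_congr rfl fun i _ ↦ hT _ (hα i), hT _ (sum_pos (fun i _ ↦ hα i) univ_nonempty)] at this
  have hpos {x : ℝ} (hx : 0 < x) := multinomialGamma_pos hα hx
  have hlog {x : ℝ} (hx : 0 < x) := log_multinomialGamma hα hx
  rw [← log_lt_log_iff (mul_pos (hpos (by positivity)) (hpos h3))
      (mul_pos (hpos h1) (hpos (by positivity))),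
    log_mul (hpos (by positivity)).ne' (hpos h3).ne',
    log_mul (hpos h1).ne' (hpos (by positivity)).ne',
    hlog h1, hlog h3, hlog (add_pos h1 h2), hlog (add_pos h2 h3)]
  simp only [T, sum_add_distrib, sum_sub_distrib] at hsuper
  linarith

end multinomialGamma

theorem stmt18_general (n r : ℕ) (hr : 1 ≤ r)
    (α : Fin (r + 1) → ℝ) (hα : ∀ i, 0 < α i) (hsum : ∑ i, α i = n)
    (Q : ℝ → ℝ) (hQ : ∀ x, Q x = Real.Gamma (x * n + 1) / ∏ i, Real.Gamma (x * α i + 1))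
    (x₁ x₂ x₃ : ℝ) (h1 : 0 < x₁) (h13 : x₁ ≤ x₃) (h2 : 0 < x₂) :
    Q (x₁ + x₂) * Q x₃ ≤ Q x₁ * Q (x₂ + x₃) ∧
    (Q (x₁ + x₂) * Q x₃ = Q x₁ * Q (x₂ + x₃) ↔ x₁ = x₃) := by
  obtain rfl : Q = multinomialGamma α := funext fun x ↦ by rw [hQ, multinomialGamma, hsum]
  rcases h13.eq_or_lt with rfl | hlt
  · rw [add_comm x₂, mul_comm]
    exact ⟨le_rfl, iff_of_true rfl rfl⟩
  · have hcard : 1 < Fintype.card (Fin (r + 1)) := by rw [Fintype.card_fin]; omega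
    have key := multinomialGamma_mul_lt hα hcard h1 h2 hlt
    exact ⟨key.le, iff_of_false key.ne hlt.ne⟩

theorem stmt18 (n r : ℕ) (hn : 1 ≤ n) (hr : 1 ≤ r)
    (α : Fin (r + 1) → ℝ) (hα : ∀ i, 0 < α i) (hsum : ∑ i, α i = n)
    (Q : ℝ → ℝ) (hQ : ∀ x, Q x = Real.Gamma (x * n + 1) / ∏ i, Real.Gamma (x * α i + 1))
    (x₁ x₂ x₃ : ℝ) (h1 : 0 < x₁) (h13 : x₁ ≤ x₃) (h2 : 0 < x₂) :
    Q (x₁ + x₂) * Q x₃ ≤ Q x₁ * Q (x₂ + x₃) ∧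
    (Q (x₁ + x₂) * Q x₃ = Q x₁ * Q (x₂ + x₃) ↔ x₁ = x₃) :=
  stmt18_general n r hr α hα hsum Q hQ x₁ x₂ x₃ h1 h13 h2
end

section
/- For y > 1, β ≥ 0, and t = y^(1/u) with u > 0, define h_β(t) = [β²(t-1)² + 2β(t-1)t + (t+1)t] log t − 2(t−1)[β(t−1) + t]. Then h_β(t) > 0 for all t > 1 and all β ≥ 0. -/
/-!
Grouped by powers of `β`, the coefficients of `h_β(t)` are nonnegative for `t > 1` because
`log t ≥ 1 - 1/t`, and the `β`-free one is positive because `log t > 2(t-1)/(t+1)`.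
-/

open Real

lemma sub_one_le_mul_log {t : ℝ} (ht : 0 < t) : t - 1 ≤ t * log t := by
  have h := mul_le_mul_of_nonneg_left (one_sub_inv_le_log_of_pos ht) ht.le
  rwa [mul_sub, mul_one, mul_inv_cancel₀ ht.ne'] at h

lemma two_mul_sub_one_lt_add_one_mul_log {t : ℝ} (ht : 1 < t) :
    2 * (t - 1) < (t + 1) * log t := by
  have h := lt_log_one_add_of_pos (sub_pos.mpr ht)
  rw [add_sub_cancel, sub_add, show (1 : ℝ) - 2 = -1 by norm_num, sub_neg_eq_add,
    div_lt_iff₀ (by linarith)] at h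
  linarith

theorem stmt19 (β : ℝ) (hβ : 0 ≤ β) (t : ℝ) (ht : 1 < t) :
    0 < (β ^ 2 * (t - 1) ^ 2 + 2 * β * (t - 1) * t + (t + 1) * t) * Real.log t -
        2 * (t - 1) * (β * (t - 1) + t) := by
  have hregroup :
      (β ^ 2 * (t - 1) ^ 2 + 2 * β * (t - 1) * t + (t + 1) * t) * log t -
        2 * (t - 1) * (β * (t - 1) + t) =
      β ^ 2 * (t - 1) ^ 2 * log t + 2 * β * (t - 1) * (t * log t - (t - 1)) +
        t * ((t + 1) * log t - 2 * (t - 1)) := by ring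
  have hquad : 0 ≤ β ^ 2 * (t - 1) ^ 2 * log t := by
    have := log_pos ht
    positivity
  have hlin : 0 ≤ 2 * β * (t - 1) * (t * log t - (t - 1)) :=
    mul_nonneg (by nlinarith) (sub_nonneg.mpr (sub_one_le_mul_log (by linarith)))
  have hconst : 0 < t * ((t + 1) * log t - 2 * (t - 1)) :=
    mul_pos (by linarith) (sub_pos.mpr (two_mul_sub_one_lt_add_one_mul_log ht))
  rw [hregroup]
  linarith
end
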